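/- arXiv:1009.4364 — 2 statements merged into one kernel-verified Lean document; each statement's English description precedes it below -/
import Mathlib

section
/- Let h ∈ ℤ[x] be a nonzero polynomial and let c ∈ ℂ be a complex number with |c| = 1 such that (x − c)^κ divides h in ℂ[x] for some integer κ ≥ 1. Then the distortion of h satisfies Δ_h(l) ⪰ l^{κ+1}. -/
/-!
For `|a| = 1` put `G_a = ∑_{j<n} (ā x)^j`. Since `a ā = 1`, `(x - a) G_a = a (ā x - 1) G_a = a (āⁿ xⁿ - 1)`,
so `(x - a)^κ ∣ H` makes the ℓ¹-norm of `H G_a^{κ+1}` grow only like `O(n)`, while `G_a(a) = n`.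

As `h` has real coefficients, `c̄` is a root of `h` of the same multiplicity as `c`, so the real
polynomial `Φ = G_c^{κ+1} + G_c̄^{κ+1}` satisfies `‖h Φ‖₁ = O(n)`. Rounding its coefficients gives
`f ∈ ℤ[x]` of degree `O(n)` with `‖f - Φ‖₁ = O(n)`, hence `S(hf) = O(n)`, and
`S(f) ≥ |Φ(c)| - O(n) = |n^{κ+1} + (∑_{j<n} c^{2j})^{κ+1}| - O(n) ≳ n^{κ+1}`: the geometric sum is
bounded unless `c² = 1`, in which case it equals `n`.
-/

open scoped Pointwise

namespace DistortionPaper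

section Defs

variable (A B : Type*) [Group A] [Group B]

/-- The base group of the restricted wreath product: finitely supported functions `B → A`
under pointwise multiplication, as a subgroup of `B → A`. -/
def WreathBase : Subgroup (B → A) where
  carrier := {f | (Function.mulSupport f).Finite}
  one_mem' := by
    simp [Function.mulSupport_one]
  mul_mem' := by
    intro f g hf hg
    exact ((Set.Finite.union hf hg).subset (Function.mulSupport_mul f g))
  inv_mem' := by
    intro f hf
    simpa [Function.mulSupport_inv] using hf

/-- The shift automorphism of the base group: `(g ∘ f)(x) = f(x * g)`. -/
def wreathShift (g : B) : WreathBase A B ≃* WreathBase A B where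
  toFun f := ⟨fun x => (f : B → A) (x * g), by
    have h : Function.mulSupport (fun x => (f : B → A) (x * g))
        ⊆ (fun x : B => x * g) ⁻¹' Function.mulSupport (f : B → A) := fun x hx => hx
    exact (Set.Finite.preimage (Set.injOn_of_injective (mul_left_injective g)) f.2).subset h⟩
  invFun f := ⟨fun x => (f : B → A) (x * g⁻¹), by
    have h : Function.mulSupport (fun x => (f : B → A) (x * g⁻¹))
        ⊆ (fun x : B => x * g⁻¹) ⁻¹' Function.mulSupport (f : B → A) := fun x hx => hx
    exact (Set.Finite.preimage (Set.injOn_of_injective (mul_left_injective g⁻¹)) f.2).subset h⟩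
  left_inv f := Subtype.ext <| funext fun x => by simp [mul_assoc]
  right_inv f := Subtype.ext <| funext fun x => by simp [mul_assoc]
  map_mul' f₁ f₂ := Subtype.ext <| funext fun _ => rfl

/-- The action of `B` on the base group by shifts. -/
def wreathAction : B →* MulAut (WreathBase A B) where
  toFun g := wreathShift A B g
  map_one' := by
    refine MulEquiv.ext fun f => Subtype.ext <| funext fun x => ?_
    show (f : B → A) (x * 1) = (f : B → A) x
    rw [mul_one]
  map_mul' g₁ g₂ := by
    refine MulEquiv.ext fun f => Subtype.ext <| funext fun x => ?_
    show (f : B → A) (x * (g₁ * g₂)) = (f : B → A) (x * g₁ * g₂)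
    rw [mul_assoc]

/-- The restricted wreath product `A wr B`. -/
abbrev WreathProduct := WreathBase A B ⋊[wreathAction A B] B

/-- The element of the base group supported at `1 ∈ B` with value `a`. -/
noncomputable def toBase (a : A) : WreathBase A B := by
  classical
  exact ⟨fun x => if x = (1 : B) then a else 1, by
    apply Set.Finite.subset (Set.finite_singleton (1 : B))
    intro x hx
    simp only [Function.mem_mulSupport] at hx
    simp only [Set.mem_singleton_iff]
    by_contra hne
    rw [if_neg hne] at hx
    exact hx rfl⟩

/-- The canonical copy of `A` in `A wr B` (functions supported at `1`). -/
noncomputable def ofPassive (a : A) : WreathProduct A B :=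
  SemidirectProduct.inl (toBase A B a)

/-- The canonical copy of `B` in `A wr B`. -/
def ofActive (g : B) : WreathProduct A B := SemidirectProduct.inr g

/-- The generating set `S ∪ T` of `A wr B` obtained from generating sets `S` of `A`
and `T` of `B`. -/
def wreathGen (S : Set A) (T : Set B) : Set (WreathProduct A B) :=
  (fun a => ofPassive A B a) '' S ∪ (fun g => ofActive A B g) '' T

end Defs

/-- Word length of `g` with respect to the set `T`: the least `n` such that `g` is a
product of `n` elements of `T ∪ T⁻¹` (and `0` if no such `n` exists). -/
noncomputable def wordLength {G : Type*} [Group G] (T : Set G) (g : G) : ℕ :=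
  sInf {n | ∃ f : Fin n → G, (∀ i, f i ∈ T ∪ T⁻¹) ∧ (List.ofFn f).prod = g}

/-- The distortion function of a subgroup `H` of `G`, where `T` is a generating set of `G`
and `S` a generating set of `H`. -/
noncomputable def distortion {G : Type*} [Group G] (T : Set G) (H : Subgroup G)
    (S : Set H) (l : ℕ) : ℕ :=
  sSup (wordLength S '' {h : H | wordLength T (h : G) ≤ l})

/-- `f ⪯ g` : there is `C > 0` with `f l ≤ C * g (C * l)` for all `l`. -/
def Dominates (f g : ℕ → ℕ) : Prop := ∃ C : ℕ, 0 < C ∧ ∀ l, f l ≤ C * g (C * l)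

/-- `f ≈ g` : `f ⪯ g` and `g ⪯ f`. -/
def DistEquiv (f g : ℕ → ℕ) : Prop := Dominates f g ∧ Dominates g f

/-- A subgroup is subnormal if there is a finite chain from it to the whole group,
each term normal in the next. -/
def IsSubnormal {G : Type*} [Group G] (H : Subgroup G) : Prop :=
  ∃ (n : ℕ) (c : ℕ → Subgroup G), c 0 = H ∧ c n = ⊤ ∧
    ∀ i < n, c i ≤ c (i + 1) ∧ ∀ x ∈ c (i + 1), ∀ h ∈ c i, x * h * x⁻¹ ∈ c i

/-- `ℤ` as a multiplicative group. -/
abbrev Mℤ := Multiplicative ℤ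

/-- The wreath product `ℤ wr ℤ`. -/
abbrev ZwrZ := WreathProduct Mℤ Mℤ

/-- The standard generator `a` of `ℤ wr ℤ` (passive copy, supported at `1`). -/
noncomputable def aZ : ZwrZ := ofPassive Mℤ Mℤ (Multiplicative.ofAdd 1)

/-- The standard generator `b` of `ℤ wr ℤ` (active copy). -/
def bZ : ZwrZ := ofActive Mℤ Mℤ (Multiplicative.ofAdd 1)

/-- `S(f)`: the sum of the absolute values of the coefficients of `f`. -/
def polyS (f : Polynomial ℤ) : ℕ := ∑ i ∈ f.support, (f.coeff i).natAbs

/-- The distortion function of a polynomial `h ∈ ℤ[x]`: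
`Δ_h(l) = sup { S(f) : deg f ≤ l, S(hf) ≤ l }`. -/
noncomputable def polyDistortion (h : Polynomial ℤ) (l : ℕ) : ℕ :=
  sSup {n | ∃ f : Polynomial ℤ, f.natDegree ≤ l ∧ polyS (h * f) ≤ l ∧ polyS f = n}

/-- The element `h(x)a = Σ_j d_j (bʲ a b⁻ʲ)` of the base group of `ℤ wr ℤ`, for
`h(x) = Σ_j d_j xʲ ∈ ℤ[x]`. -/
noncomputable def polyElem (h : Polynomial ℤ) : WreathBase Mℤ Mℤ :=
  ∏ j ∈ h.support,
    (wreathAction Mℤ Mℤ (Multiplicative.ofAdd (j : ℤ))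
        (toBase Mℤ Mℤ (Multiplicative.ofAdd 1))) ^ (h.coeff j)

/-- The element `w = h(x)a` of `ℤ wr ℤ`. -/
noncomputable def wPoly (h : Polynomial ℤ) : ZwrZ := SemidirectProduct.inl (polyElem h)

/-- The exemplary subgroup `H = ⟨b, h(x)a⟩` of `ℤ wr ℤ` associated with `h ∈ ℤ[x]`. -/
noncomputable def exemplary (h : Polynomial ℤ) : Subgroup ZwrZ :=
  Subgroup.closure {bZ, wPoly h}

/-- The generating set `{b, w}` of the exemplary subgroup. -/
noncomputable def exemplaryGens (h : Polynomial ℤ) : Set ↥(exemplary h) :=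
  {⟨bZ, Subgroup.subset_closure (Set.mem_insert _ _)⟩,
   ⟨wPoly h, Subgroup.subset_closure (Set.mem_insert_iff.mpr (Or.inr rfl))⟩}

open Polynomial Finset

section L1Norm

variable {R : Type*} [SeminormedRing R]

noncomputable def l1Norm (p : R[X]) : ℝ := p.sum fun _ a => ‖a‖

lemma l1Norm_eq_sum_range {p : R[X]} {N : ℕ} (hN : p.natDegree < N) :
    l1Norm p = ∑ i ∈ range N, ‖p.coeff i‖ :=
  sum_over_range' _ (fun _ => norm_zero) N hN

lemma l1Norm_nonneg (p : R[X]) : 0 ≤ l1Norm p :=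
  Finset.sum_nonneg fun _ _ => norm_nonneg _

@[simp]
lemma l1Norm_zero : l1Norm (0 : R[X]) = 0 := by
  simp [l1Norm]

lemma l1Norm_add_le (p q : R[X]) : l1Norm (p + q) ≤ l1Norm p + l1Norm q := by
  set N := max (p + q).natDegree (max p.natDegree q.natDegree) + 1
  rw [l1Norm_eq_sum_range (p := p + q) (N := N) (by omega), l1Norm_eq_sum_range (N := N) (by omega),
    l1Norm_eq_sum_range (N := N) (by omega), ← sum_add_distrib]
  exact sum_le_sum fun i _ => by simpa only [coeff_add] using norm_add_le _ _

lemma l1Norm_sum_le {ι : Type*} (s : Finset ι) (f : ι → R[X]) :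
    l1Norm (∑ i ∈ s, f i) ≤ ∑ i ∈ s, l1Norm (f i) :=
  le_sum_of_subadditive l1Norm l1Norm_zero.le l1Norm_add_le s f

@[simp]
lemma l1Norm_neg (p : R[X]) : l1Norm (-p) = l1Norm p := by
  rw [l1Norm_eq_sum_range (N := p.natDegree + 1) (by rw [natDegree_neg]; omega),
    l1Norm_eq_sum_range (Nat.lt_succ_self _)]
  simp

lemma l1Norm_sub_le (p q : R[X]) : l1Norm (p - q) ≤ l1Norm p + l1Norm q := by
  simpa only [sub_eq_add_neg, l1Norm_neg] using l1Norm_add_le p (-q)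

@[simp]
lemma l1Norm_C_mul_X_pow (a : R) (n : ℕ) : l1Norm (C a * X ^ n) = ‖a‖ := by
  rw [C_mul_X_pow_eq_monomial, l1Norm, sum_monomial_index _ _ norm_zero]

lemma l1Norm_C (a : R) : l1Norm (C a) = ‖a‖ := by
  simpa using l1Norm_C_mul_X_pow a 0

lemma l1Norm_mul_le (p q : R[X]) : l1Norm (p * q) ≤ l1Norm p * l1Norm q := by
  conv_lhs => rw [p.as_sum_support_C_mul_X_pow, q.as_sum_support_C_mul_X_pow, sum_mul_sum]
  refine (l1Norm_sum_le _ _).trans ?_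
  rw [l1Norm, l1Norm, Polynomial.sum_def, Polynomial.sum_def, sum_mul_sum]
  refine sum_le_sum fun i _ => (l1Norm_sum_le _ _).trans (sum_le_sum fun j _ => ?_)
  rw [X_pow_mul_assoc, ← mul_assoc, ← C_mul, mul_assoc, ← pow_add, l1Norm_C_mul_X_pow]
  exact norm_mul_le _ _

variable [NormOneClass R]

lemma l1Norm_pow_le (p : R[X]) (k : ℕ) : l1Norm (p ^ k) ≤ l1Norm p ^ k := by
  induction k with
  | zero => rw [pow_zero, pow_zero, ← C_1, l1Norm_C, norm_one]
  | succ k ih =>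
    rw [pow_succ, pow_succ]
    exact (l1Norm_mul_le _ _).trans (mul_le_mul_of_nonneg_right ih (l1Norm_nonneg p))

lemma norm_eval_le_l1Norm {z : R} (hz : ‖z‖ ≤ 1) (p : R[X]) : ‖p.eval z‖ ≤ l1Norm p := by
  rw [eval_eq_sum, l1Norm]
  refine norm_sum_le_of_le _ fun i _ => ?_
  calc ‖p.coeff i * z ^ i‖ ≤ ‖p.coeff i‖ * ‖z‖ ^ i := norm_mul_le_of_le le_rfl (norm_pow_le _ _)
    _ ≤ ‖p.coeff i‖ := mul_le_of_le_one_right (norm_nonneg _) (pow_le_one₀ (norm_nonneg _) hz)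

end L1Norm

lemma l1Norm_map {R S : Type*} [SeminormedRing R] [SeminormedRing S] (f : R →+* S)
    (hf : ∀ a, ‖f a‖ = ‖a‖) (p : R[X]) : l1Norm (p.map f) = l1Norm p := by
  rw [l1Norm_eq_sum_range (Nat.lt_succ_of_le (natDegree_map_le (f := f) (p := p))),
    l1Norm_eq_sum_range (Nat.lt_succ_self _)]
  simp [hf]

lemma polyS_eq_l1Norm (p : ℤ[X]) : (polyS p : ℝ) = l1Norm p := by
  simp [polyS, l1Norm, Polynomial.sum_def, Int.norm_eq_abs]

lemma polyS_eq_l1Norm_map (p : ℤ[X]) : (polyS p : ℝ) = l1Norm (p.map (Int.castRingHom ℂ)) := by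
  rw [l1Norm_map _ (fun a => by simp [Int.norm_eq_abs]), polyS_eq_l1Norm]

lemma polyS_one : polyS 1 = 1 := by
  have : (polyS 1 : ℝ) = 1 := by rw [polyS_eq_l1Norm, ← C_1, l1Norm_C, norm_one]
  exact_mod_cast this

section Distortion

variable {h : ℤ[X]}

lemma bddAbove_polyDistortion_set (hh : h ≠ 0) (l : ℕ) :
    BddAbove {n | ∃ f : ℤ[X], f.natDegree ≤ l ∧ polyS (h * f) ≤ l ∧ polyS f = n} := by
  refine ((finite_mahlerMeasure_le l (l : NNReal)).image polyS).bddAbove.mono ?_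
  rintro _ ⟨f, hdeg, hS, rfl⟩
  refine ⟨f, ⟨hdeg, ?_⟩, rfl⟩
  -- Northcott: `M(f) ≤ M(h) M(f) = M(hf) ≤ S(hf)`, as `M(h) ≥ 1` for a nonzero integer polynomial.
  calc (f.map (Int.castRingHom ℂ)).mahlerMeasure
      ≤ (h.map (Int.castRingHom ℂ)).mahlerMeasure * (f.map (Int.castRingHom ℂ)).mahlerMeasure :=
        le_mul_of_one_le_left (mahlerMeasure_nonneg _) (one_le_mahlerMeasure_of_ne_zero hh)
    _ = ((h * f).map (Int.castRingHom ℂ)).mahlerMeasure := by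
        rw [Polynomial.map_mul, mahlerMeasure_mul]
    _ ≤ polyS (h * f) := (mahlerMeasure_le_sum_norm_coeff _).trans (polyS_eq_l1Norm_map _).ge
    _ ≤ l := by exact_mod_cast hS

lemma polyS_le_polyDistortion (hh : h ≠ 0) {f : ℤ[X]} {l : ℕ} (hdeg : f.natDegree ≤ l)
    (hS : polyS (h * f) ≤ l) : polyS f ≤ polyDistortion h l :=
  le_csSup (bddAbove_polyDistortion_set hh l) ⟨f, hdeg, hS, rfl⟩

lemma dominates_polyDistortion_of_witnesses (hh : h ≠ 0) {k A B D L : ℕ} (f : ℕ → ℤ[X])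
    (hdeg : ∀ l, (f l).natDegree ≤ A * l) (hS : ∀ l, 1 ≤ l → polyS (h * f l) ≤ B * l)
    (hlow : ∀ l, L ≤ l → l ^ (k + 1) ≤ D * polyS (f l)) :
    Dominates (fun l => l ^ (k + 1)) (polyDistortion h) := by
  set C := A + B + D + polyS h + L ^ (k + 1) + 1
  refine ⟨C, by omega, fun l => ?_⟩
  rcases Nat.eq_zero_or_pos l with rfl | hl
  · simp
  by_cases hLl : L ≤ l
  · have hf := polyS_le_polyDistortion hh (f := f l) (l := C * l)
      ((hdeg l).trans (Nat.mul_le_mul_right _ (by omega)))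
      ((hS l hl).trans (Nat.mul_le_mul_right _ (by omega)))
    exact (hlow l hLl).trans (Nat.mul_le_mul (by omega) hf)
  · have hone : 1 ≤ polyDistortion h (C * l) := by
      refine polyS_one ▸ polyS_le_polyDistortion hh (by simp) ?_
      rw [mul_one]
      exact (by omega : polyS h ≤ C).trans (Nat.le_mul_of_pos_right C hl)
    calc l ^ (k + 1) ≤ L ^ (k + 1) := Nat.pow_le_pow_left (by omega) _
      _ ≤ C * 1 := by omega
      _ ≤ C * polyDistortion h (C * l) := Nat.mul_le_mul_left C hone

end Distortion

noncomputable def roundRe (p : ℂ[X]) : ℤ[X] := ∑ i ∈ p.support, C (round (p.coeff i).re) * X ^ i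

@[simp]
lemma coeff_roundRe (p : ℂ[X]) (i : ℕ) : (roundRe p).coeff i = round (p.coeff i).re := by
  simp only [roundRe, finsetSum_coeff, coeff_C_mul_X_pow, sum_ite_eq, mem_support_iff]
  split_ifs with hi
  · rfl
  · simp [not_not.mp hi]

lemma natDegree_roundRe_le (p : ℂ[X]) : (roundRe p).natDegree ≤ p.natDegree :=
  natDegree_le_iff_coeff_eq_zero.mpr fun i hi => by simp [coeff_eq_zero_of_natDegree_lt hi]

lemma l1Norm_map_roundRe_sub_le {p : ℂ[X]} (hp : ∀ i, (p.coeff i).im = 0) :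
    l1Norm ((roundRe p).map (Int.castRingHom ℂ) - p) ≤ (p.natDegree + 1) / 2 := by
  have hdeg : ((roundRe p).map (Int.castRingHom ℂ) - p).natDegree < p.natDegree + 1 :=
    Nat.lt_succ_of_le <| (natDegree_sub_le _ _).trans <|
      max_le (natDegree_map_le.trans (natDegree_roundRe_le p)) le_rfl
  rw [l1Norm_eq_sum_range hdeg]
  calc ∑ i ∈ range (p.natDegree + 1), ‖((roundRe p).map (Int.castRingHom ℂ) - p).coeff i‖
      ≤ ∑ _i ∈ range (p.natDegree + 1), (1 / 2 : ℝ) := by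
        refine sum_le_sum fun i _ => ?_
        have hre : p.coeff i = ((p.coeff i).re : ℂ) := Complex.ext rfl (by simp [hp i])
        rw [coeff_sub, coeff_map, coeff_roundRe, hre, eq_intCast, Complex.ofReal_re,
          ← Complex.ofReal_intCast, ← Complex.ofReal_sub, Complex.norm_real, Real.norm_eq_abs,
          abs_sub_comm]
        exact abs_sub_round _
    _ = (p.natDegree + 1) / 2 := by
        rw [sum_const, card_range, nsmul_eq_mul]
        push_cast
        ring

lemma norm_geom_sum_le {𝕜 : Type*} [NormedDivisionRing 𝕜] {z : 𝕜} (hz : ‖z‖ ≤ 1) (hz1 : z ≠ 1)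
    (n : ℕ) : ‖∑ j ∈ range n, z ^ j‖ ≤ 2 / ‖z - 1‖ := by
  rw [geom_sum_eq hz1, norm_div]
  gcongr
  calc ‖z ^ n - 1‖ ≤ ‖z‖ ^ n + ‖(1 : 𝕜)‖ := (norm_sub_le _ _).trans (by rw [norm_pow])
    _ ≤ 2 := by rw [norm_one]; linarith [pow_le_one₀ (norm_nonneg z) hz (n := n)]

lemma succ_mul_le_pow_succ {k n : ℕ} (hn : k + 1 ≤ n) : (k + 1) * n ≤ n ^ (k + 1) := by
  rw [pow_succ]
  refine Nat.mul_le_mul_right n ?_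
  rcases k with _ | k
  · simp
  · exact hn.trans (Nat.le_self_pow (Nat.succ_ne_zero k) n)

noncomputable def geomPoly (b : ℂ) (n : ℕ) : ℂ[X] := ∑ j ∈ range n, (C b * X) ^ j

lemma natDegree_geomPoly_le (b : ℂ) (n : ℕ) : (geomPoly b n).natDegree ≤ n :=
  natDegree_sum_le_of_forall_le _ _ fun j hj => by
    rw [mul_pow, ← C_pow]
    exact (natDegree_C_mul_X_pow_le _ _).trans (mem_range.mp hj).le

lemma l1Norm_geomPoly_le {b : ℂ} (hb : ‖b‖ = 1) (n : ℕ) : l1Norm (geomPoly b n) ≤ n :=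
  (l1Norm_sum_le _ _).trans <| le_of_eq <| by
    simp only [mul_pow, ← C_pow, l1Norm_C_mul_X_pow, norm_pow, hb, one_pow, sum_const, card_range,
      nsmul_eq_mul, mul_one]

lemma eval_geomPoly (b z : ℂ) (n : ℕ) : (geomPoly b n).eval z = ∑ j ∈ range n, (b * z) ^ j := by
  simp [geomPoly, eval_finsetSum]

lemma map_conj_geomPoly (b : ℂ) (n : ℕ) :
    (geomPoly b n).map (starRingEnd ℂ) = geomPoly (starRingEnd ℂ b) n := by
  simp [geomPoly, Polynomial.map_sum]

lemma exists_l1Norm_mul_geomPoly_pow_le {H : ℂ[X]} {a : ℂ} (ha : ‖a‖ = 1) {κ : ℕ}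
    (hdvd : (X - C a) ^ κ ∣ H) :
    ∃ K : ℝ, ∀ n : ℕ, l1Norm (H * geomPoly (starRingEnd ℂ a) n ^ (κ + 1)) ≤ K * n := by
  obtain ⟨r, rfl⟩ := hdvd
  set b := starRingEnd ℂ a
  have hb : ‖b‖ = 1 := by rw [Complex.norm_conj, ha]
  have hab : C a * C b = 1 := by
    rw [← C_mul, Complex.mul_conj', ha]
    simp
  refine ⟨l1Norm r * 2 ^ κ, fun n => ?_⟩
  set G := geomPoly b n
  have htele : G * ((X - C a) * C b) = (C b * X) ^ n - 1 := by
    rw [sub_mul, mul_comm X, hab]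
    exact geom_sum_mul _ _
  have hfactor : (X - C a) ^ κ * r * G ^ (κ + 1) = C a ^ κ * (r * ((C b * X) ^ n - 1) ^ κ * G) := by
    calc (X - C a) ^ κ * r * G ^ (κ + 1)
        = (X - C a) ^ κ * r * G ^ (κ + 1) * (C a ^ κ * C b ^ κ) := by
          rw [← mul_pow, hab, one_pow, mul_one]
      _ = C a ^ κ * (r * (G ^ κ * ((X - C a) ^ κ * C b ^ κ)) * G) := by ring
      _ = _ := by rw [← mul_pow, ← mul_pow, htele]
  have hsub : l1Norm ((C b * X) ^ n - 1) ≤ 2 := by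
    refine (l1Norm_sub_le _ _).trans ?_
    rw [mul_pow, ← C_pow, l1Norm_C_mul_X_pow, ← C_1, l1Norm_C, norm_pow, hb]
    norm_num
  rw [hfactor, ← C_pow]
  calc l1Norm (C (a ^ κ) * (r * ((C b * X) ^ n - 1) ^ κ * G))
      ≤ l1Norm (C (a ^ κ)) * (l1Norm r * l1Norm ((C b * X) ^ n - 1) ^ κ * l1Norm G) := by
        refine (l1Norm_mul_le _ _).trans (mul_le_mul_of_nonneg_left ?_ (l1Norm_nonneg _))
        refine (l1Norm_mul_le _ _).trans (mul_le_mul_of_nonneg_right ?_ (l1Norm_nonneg _))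
        refine (l1Norm_mul_le _ _).trans (mul_le_mul_of_nonneg_left ?_ (l1Norm_nonneg _))
        exact l1Norm_pow_le _ _
    _ ≤ 1 * (l1Norm r * 2 ^ κ * n) := by
        rw [l1Norm_C, norm_pow, ha, one_pow]
        refine mul_le_mul_of_nonneg_left (mul_le_mul ?_ (l1Norm_geomPoly_le hb n) (l1Norm_nonneg _)
          (mul_nonneg (l1Norm_nonneg r) (by positivity))) zero_le_one
        exact mul_le_mul_of_nonneg_left (pow_le_pow_left₀ (l1Norm_nonneg _) hsub κ) (l1Norm_nonneg r)
    _ = l1Norm r * 2 ^ κ * n := one_mul _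

section TestPolynomial

variable (c : ℂ) (κ : ℕ)

noncomputable def geomPowSum (n : ℕ) : ℂ[X] :=
  geomPoly (starRingEnd ℂ c) n ^ (κ + 1) + geomPoly c n ^ (κ + 1)

noncomputable def testPoly (n : ℕ) : ℤ[X] := roundRe (geomPowSum c κ n)

lemma im_coeff_geomPowSum (n i : ℕ) : ((geomPowSum c κ n).coeff i).im = 0 := by
  have hconj : geomPoly c n ^ (κ + 1)
      = (geomPoly (starRingEnd ℂ c) n ^ (κ + 1)).map (starRingEnd ℂ) := by
    rw [Polynomial.map_pow, map_conj_geomPoly, Complex.conj_conj]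
  rw [geomPowSum, hconj, coeff_add, coeff_map, Complex.add_conj, Complex.ofReal_im]

lemma natDegree_geomPowSum_le (n : ℕ) : (geomPowSum c κ n).natDegree ≤ (κ + 1) * n :=
  (natDegree_add_le _ _).trans <| max_le (natDegree_pow_le_of_le _ (natDegree_geomPoly_le _ _))
    (natDegree_pow_le_of_le _ (natDegree_geomPoly_le _ _))

lemma natDegree_testPoly_le (n : ℕ) : (testPoly c κ n).natDegree ≤ (κ + 1) * n :=
  (natDegree_roundRe_le _).trans (natDegree_geomPowSum_le c κ n)

lemma l1Norm_map_testPoly_sub_le (n : ℕ) :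
    l1Norm ((testPoly c κ n).map (Int.castRingHom ℂ) - geomPowSum c κ n)
      ≤ ((κ + 1) * n + 1) / 2 := by
  refine (l1Norm_map_roundRe_sub_le (im_coeff_geomPowSum c κ n)).trans ?_
  gcongr
  exact_mod_cast natDegree_geomPowSum_le c κ n

variable {c κ}

lemma X_sub_C_conj_pow_dvd_map {h : ℤ[X]} (hdvd : (X - C c) ^ κ ∣ h.map (Int.castRingHom ℂ)) :
    (X - C (starRingEnd ℂ c)) ^ κ ∣ h.map (Int.castRingHom ℂ) := by
  have hconj := Polynomial.map_dvd (starRingEnd ℂ) hdvd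
  rwa [Polynomial.map_pow, Polynomial.map_sub, map_X, map_C, Polynomial.map_map,
    RingHom.ext_int ((starRingEnd ℂ).comp (Int.castRingHom ℂ)) (Int.castRingHom ℂ)] at hconj

lemma exists_polyS_mul_testPoly_le {h : ℤ[X]} (hc : ‖c‖ = 1)
    (hdvd : (X - C c) ^ κ ∣ h.map (Int.castRingHom ℂ)) :
    ∃ B : ℕ, ∀ n, 1 ≤ n → polyS (h * testPoly c κ n) ≤ B * n := by
  set H := h.map (Int.castRingHom ℂ)
  obtain ⟨K₁, hK₁⟩ := exists_l1Norm_mul_geomPoly_pow_le hc hdvd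
  obtain ⟨K₂, hK₂⟩ := exists_l1Norm_mul_geomPoly_pow_le (by rwa [Complex.norm_conj])
    (X_sub_C_conj_pow_dvd_map hdvd)
  simp only [Complex.conj_conj] at hK₂
  set K := K₁ + K₂ + polyS h * (κ + 2) / 2
  refine ⟨⌈K⌉₊, fun n hn => ?_⟩
  have hn' : (1 : ℝ) ≤ n := by exact_mod_cast hn
  set E := (testPoly c κ n).map (Int.castRingHom ℂ) - geomPowSum c κ n
  have hsplit : (testPoly c κ n).map (Int.castRingHom ℂ)
      = geomPoly (starRingEnd ℂ c) n ^ (κ + 1) + geomPoly c n ^ (κ + 1) + E := by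
    simp [E, geomPowSum]
  have hreal : (polyS (h * testPoly c κ n) : ℝ) ≤ K * n := by
    calc (polyS (h * testPoly c κ n) : ℝ)
        = l1Norm (H * geomPoly (starRingEnd ℂ c) n ^ (κ + 1) + H * geomPoly c n ^ (κ + 1)
            + H * E) := by
          rw [polyS_eq_l1Norm_map, Polynomial.map_mul, hsplit, mul_add, mul_add]
      _ ≤ K₁ * n + K₂ * n + polyS h * (((κ + 1) * n + 1) / 2) := by
          refine (l1Norm_add_le _ _).trans
            (add_le_add ((l1Norm_add_le _ _).trans (add_le_add (hK₁ n) (hK₂ n))) ?_)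
          rw [polyS_eq_l1Norm_map]
          exact (l1Norm_mul_le _ _).trans
            (mul_le_mul_of_nonneg_left (l1Norm_map_testPoly_sub_le c κ n) (l1Norm_nonneg _))
      _ ≤ K * n := by
          have hS : 0 ≤ (polyS h : ℝ) := Nat.cast_nonneg _
          simp only [K]
          nlinarith
  exact_mod_cast hreal.trans (mul_le_mul_of_nonneg_right (Nat.le_ceil K) (Nat.cast_nonneg n))

variable (κ)

lemma exists_pow_sub_le_norm_eval_geomPowSum (hc : ‖c‖ = 1) :
    ∃ M : ℝ, ∀ n : ℕ, (n : ℝ) ^ (κ + 1) - M ≤ ‖(geomPowSum c κ n).eval c‖ := by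
  have hcc : starRingEnd ℂ c * c = 1 := by
    rw [Complex.conj_mul', hc]
    simp
  have heval : ∀ n : ℕ, (geomPowSum c κ n).eval c
      = (n : ℂ) ^ (κ + 1) + (∑ j ∈ range n, (c * c) ^ j) ^ (κ + 1) := by
    simp [geomPowSum, eval_geomPoly, hcc]
  by_cases h1 : c * c = 1
  · refine ⟨0, fun n => ?_⟩
    rw [heval, h1]
    simp only [one_pow, sum_const, card_range, nsmul_eq_mul, mul_one, ← two_mul, norm_mul,
      norm_pow, Complex.norm_natCast, Complex.norm_ofNat, sub_zero]
    linarith [pow_nonneg (Nat.cast_nonneg n : (0 : ℝ) ≤ n) (κ + 1)]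
  · refine ⟨(2 / ‖c * c - 1‖) ^ (κ + 1), fun n => ?_⟩
    have hw := norm_geom_sum_le (z := c * c) (by rw [norm_mul, hc, one_mul]) h1 n
    rw [heval]
    calc (n : ℝ) ^ (κ + 1) - (2 / ‖c * c - 1‖) ^ (κ + 1)
        ≤ ‖(n : ℂ) ^ (κ + 1)‖ - ‖(∑ j ∈ range n, (c * c) ^ j) ^ (κ + 1)‖ := by
          rw [norm_pow, norm_pow, Complex.norm_natCast]
          gcongr
      _ ≤ _ := norm_sub_le_norm_add _ _

lemma exists_pow_le_polyS_testPoly (hc : ‖c‖ = 1) :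
    ∃ L, ∀ n, L ≤ n → n ^ (κ + 1) ≤ 4 * polyS (testPoly c κ n) := by
  obtain ⟨M, hM⟩ := exists_pow_sub_le_norm_eval_geomPowSum κ hc
  refine ⟨⌈4 * M + 2⌉₊ + κ + 1, fun n hn => ?_⟩
  set f := testPoly c κ n
  have hS : (n : ℝ) ^ (κ + 1) - M - ((κ + 1) * n + 1) / 2 ≤ polyS f := by
    have hsub := l1Norm_sub_le (f.map (Int.castRingHom ℂ))
      (f.map (Int.castRingHom ℂ) - geomPowSum c κ n)
    rw [sub_sub_cancel] at hsub
    linarith [hM n, norm_eval_le_l1Norm hc.le (geomPowSum c κ n), l1Norm_map_testPoly_sub_le c κ n,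
      polyS_eq_l1Norm_map f]
  have hlin : ((κ + 1) * n : ℝ) ≤ n ^ (κ + 1) := by
    exact_mod_cast succ_mul_le_pow_succ (k := κ) (by omega)
  have hpow : (n : ℝ) ≤ n ^ (κ + 1) := by exact_mod_cast Nat.le_self_pow (Nat.succ_ne_zero κ) n
  have hM' : 4 * M + 2 ≤ n :=
    (Nat.le_ceil _).trans (by exact_mod_cast (by omega : ⌈4 * M + 2⌉₊ ≤ n))
  have hreal : (n : ℝ) ^ (κ + 1) ≤ 4 * polyS f := by linarith
  exact_mod_cast hreal

end TestPolynomial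

theorem statement13_general (h : Polynomial ℤ) (hh : h ≠ 0) (c : ℂ) (hc : ‖c‖ = 1)
    (κ : ℕ)
    (hdvd : (Polynomial.X - Polynomial.C c) ^ κ ∣ h.map (Int.castRingHom ℂ)) :
    Dominates (fun l => l ^ (κ + 1)) (polyDistortion h) := by
  obtain ⟨B, hB⟩ := exists_polyS_mul_testPoly_le hc hdvd
  obtain ⟨L, hL⟩ := exists_pow_le_polyS_testPoly κ hc
  exact dominates_polyDistortion_of_witnesses hh (testPoly c κ) (natDegree_testPoly_le c κ) hB hL

/-- If `c ∈ ℂ` has modulus one and `(x - c)^κ` divides `h` in `ℂ[x]`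
(`κ ≥ 1`), then `Δ_h(l) ⪰ l^{κ+1}`. -/
theorem statement13 (h : Polynomial ℤ) (hh : h ≠ 0) (c : ℂ) (hc : ‖c‖ = 1)
    (κ : ℕ) (hκ : 1 ≤ κ)
    (hdvd : (Polynomial.X - Polynomial.C c) ^ κ ∣ h.map (Int.castRingHom ℂ)) :
    Dominates (fun l => l ^ (κ + 1)) (polyDistortion h) :=
  statement13_general h hh c hc κ hdvd

end DistortionPaper
end

section
/- Let p be a prime and k ≥ 1, and let G = (ℤ/pℤ)^k wr ℤ with b the generator of the active group ℤ. Then every finitely generated subgroup H of G containing the element b is undistorted in G. -/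
open scoped Pointwise

namespace DistortionPaper

/-!
Let `M` be the set of base elements `f` with `f ∈ H`; since `b ∈ H`, `M` is invariant under
shifts. The values at `0` of the elements of `M` supported in `[0, d]` form an increasing family
of subsets of the finite group `A`, so they stabilise at some `d₀`. Hence every `f ∈ M`
supported in `[0, n]` with `n > d₀` factors as `f = e · shift₁ f'` with `e ∈ M` supported in
`[0, d₀]` and `f' ∈ M` supported in `[0, n - 1]`; in `H` this reads
`f b⁻⁽ⁿ⁺¹⁾ = e b⁻¹ (f' b⁻ⁿ)`, so `f b⁻⁽ⁿ⁺¹⁾` is a word of length `O(n)` in `b` and the finitely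
many such `e`. An element of `T`-length `l` has support and `ℤ`-coordinate in `[-cl, cl]`, which
gives `|h|_S = O(|h|_T)` on `H`. Conversely the powers of `b` have `S`-length and `T`-length
both linear, because the projection onto `ℤ` is a homomorphism.
-/

section WordLength

variable {G : Type*} [Group G] {T : Set G}

lemma wordLength_le_length (L : List G) (hL : ∀ x ∈ L, x ∈ T ∪ T⁻¹) :
    wordLength T L.prod ≤ L.length :=
  Nat.sInf_le ⟨L.get, fun i => hL _ (L.get_mem ..), by rw [List.ofFn_get]⟩

lemma exists_list_length_eq_wordLength (hT : Subgroup.closure T = ⊤) (g : G) :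
    ∃ L : List G, (∀ x ∈ L, x ∈ T ∪ T⁻¹) ∧ L.prod = g ∧ L.length = wordLength T g := by
  have hmem : g ∈ Submonoid.closure (T ∪ T⁻¹) := by
    rw [← Subgroup.closure_toSubmonoid, hT]
    trivial
  obtain ⟨L, hL, hprod⟩ := Submonoid.exists_list_of_mem_closure hmem
  have hne : {n | ∃ f : Fin n → G, (∀ i, f i ∈ T ∪ T⁻¹) ∧ (List.ofFn f).prod = g}.Nonempty :=
    ⟨L.length, L.get, fun i => hL _ (L.get_mem ..), by rw [List.ofFn_get, hprod]⟩
  obtain ⟨f, hf, hfg⟩ := Nat.sInf_mem hne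
  refine ⟨List.ofFn f, fun x hx => ?_, hfg, by simp [wordLength]⟩
  obtain ⟨i, rfl⟩ := List.mem_ofFn.mp hx
  exact hf i

lemma wordLength_one : wordLength T (1 : G) = 0 :=
  Nat.le_zero.mp (by simpa using wordLength_le_length (T := T) [] (by simp))

lemma eq_one_of_wordLength_eq_zero (hT : Subgroup.closure T = ⊤) {g : G}
    (h : wordLength T g = 0) : g = 1 := by
  obtain ⟨L, -, rfl, hL⟩ := exists_list_length_eq_wordLength hT g
  rw [List.length_eq_zero_iff.mp (hL.trans h), List.prod_nil]

lemma wordLength_mul_le (hT : Subgroup.closure T = ⊤) (g h : G) :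
    wordLength T (g * h) ≤ wordLength T g + wordLength T h := by
  obtain ⟨L, hL, rfl, hLg⟩ := exists_list_length_eq_wordLength hT g
  obtain ⟨L', hL', rfl, hLh⟩ := exists_list_length_eq_wordLength hT h
  rw [← hLg, ← hLh, ← List.prod_append, ← List.length_append]
  exact wordLength_le_length _ fun x hx => (List.mem_append.mp hx).elim (hL x) (hL' x)

lemma wordLength_inv_le (hT : Subgroup.closure T = ⊤) (g : G) :
    wordLength T g⁻¹ ≤ wordLength T g := by
  obtain ⟨L, hL, rfl, hLg⟩ := exists_list_length_eq_wordLength hT g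
  rw [List.prod_inv_reverse, ← hLg]
  refine (wordLength_le_length _ fun x hx => ?_).trans_eq (by simp)
  obtain ⟨y, hy, rfl⟩ := List.mem_map.mp (List.mem_reverse.mp hx)
  rcases hL y hy with h | h
  · exact Or.inr (by simpa using h)
  · exact Or.inl (by simpa using h)

lemma wordLength_inv (hT : Subgroup.closure T = ⊤) (g : G) :
    wordLength T g⁻¹ = wordLength T g :=
  (wordLength_inv_le hT g).antisymm (by simpa using wordLength_inv_le hT g⁻¹)

lemma wordLength_pow_le (hT : Subgroup.closure T = ⊤) (g : G) (n : ℕ) :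
    wordLength T (g ^ n) ≤ n * wordLength T g := by
  induction n with
  | zero => simp [wordLength_one]
  | succ n ih =>
    rw [pow_succ, add_one_mul]
    exact (wordLength_mul_le hT _ _).trans (Nat.add_le_add_right ih _)

lemma wordLength_zpow_le (hT : Subgroup.closure T = ⊤) (g : G) (t : ℤ) :
    wordLength T (g ^ t) ≤ t.natAbs * wordLength T g := by
  obtain ⟨n, rfl | rfl⟩ := Int.eq_nat_or_neg t <;>
    simp only [Int.natAbs_neg, Int.natAbs_natCast, zpow_neg, zpow_natCast, wordLength_inv hT,
      wordLength_pow_le hT]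

lemma wordLength_induction (hT : Subgroup.closure T = ⊤) {P : ℕ → G → Prop} (one : P 0 1)
    (mul : ∀ m n x y, P m x → P n y → P (m + n) (x * y)) {c : ℕ}
    (gen : ∀ t ∈ T ∪ T⁻¹, P c t) (g : G) : P (c * wordLength T g) g := by
  obtain ⟨L, hLT, rfl, hL⟩ := exists_list_length_eq_wordLength hT g
  rw [← hL]
  clear hL
  induction L with
  | nil => simpa using one
  | cons x L ih =>
    rw [List.prod_cons, List.length_cons, mul_add_one, add_comm]
    exact mul _ _ _ _ (gen x (hLT x (by simp))) (ih fun y hy => hLT y (by simp [hy]))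

lemma natAbs_toAdd_le_mul_wordLength (hT : Subgroup.closure T = ⊤)
    (φ : G →* Multiplicative ℤ) {c : ℕ} (hc : ∀ t ∈ T, (Multiplicative.toAdd (φ t)).natAbs ≤ c)
    (g : G) : (Multiplicative.toAdd (φ g)).natAbs ≤ c * wordLength T g := by
  refine wordLength_induction hT (P := fun n x => (Multiplicative.toAdd (φ x)).natAbs ≤ n)
    (by simp) (fun m n x y hx hy => ?_) ?_ g
  · simp only [map_mul, toAdd_mul]
    omega
  · rintro t (ht | ht)
    · exact hc t ht
    · simpa using hc _ (Set.mem_inv.mp ht)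

end WordLength

section Distortion

variable {G : Type*} [Group G] {T : Set G} {H : Subgroup G} {S : Set H} {C : ℕ}

lemma distortion_le (hC : ∀ h : H, wordLength S h ≤ C * wordLength T (h : G)) (l : ℕ) :
    distortion T H S l ≤ C * l :=
  csSup_le' <| by
    rintro _ ⟨h, hl, rfl⟩
    exact (hC h).trans (Nat.mul_le_mul_left C hl)

lemma wordLength_le_distortion (hC : ∀ h : H, wordLength S h ≤ C * wordLength T (h : G))
    {h : H} {l : ℕ} (hl : wordLength T (h : G) ≤ l) : wordLength S h ≤ distortion T H S l := by
  refine le_csSup ⟨C * l, ?_⟩ ⟨h, hl, rfl⟩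
  rintro _ ⟨h', hl', rfl⟩
  exact (hC h').trans (Nat.mul_le_mul_left C hl')

theorem distEquiv_distortion_id (hT : Subgroup.closure T = ⊤) (hS : S.Finite)
    (hSgen : Subgroup.closure S = ⊤) (hC : ∀ h : H, wordLength S h ≤ C * wordLength T (h : G))
    (φ : H →* Multiplicative ℤ) {b : H} (hb : φ b = Multiplicative.ofAdd 1) :
    DistEquiv (distortion T H S) (fun l => l) := by
  obtain ⟨c, hc⟩ := (hS.image fun s => (Multiplicative.toAdd (φ s)).natAbs).bddAbove
  refine ⟨⟨C + 1, C.succ_pos, fun l => (distortion_le hC l).trans ?_⟩,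
    ⟨c + wordLength T (b : G) + 1, by omega, fun l => ?_⟩⟩
  · exact Nat.mul_le_mul C.le_succ (Nat.le_mul_of_pos_left l C.succ_pos)
  · set D := c + wordLength T (b : G) + 1 with hD
    have hbT : wordLength T ((b ^ l : H) : G) ≤ D * l :=
      calc wordLength T ((b : G) ^ l) ≤ l * wordLength T (b : G) := wordLength_pow_le hT _ l
        _ ≤ D * l := by rw [mul_comm]; exact Nat.mul_le_mul_right l (by omega)
    calc l = (Multiplicative.toAdd (φ (b ^ l))).natAbs := by simp [hb]
      _ ≤ c * wordLength S (b ^ l) :=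
          natAbs_toAdd_le_mul_wordLength hSgen φ (fun s hs => hc ⟨s, hs, rfl⟩) _
      _ ≤ D * distortion T H S (D * l) :=
          Nat.mul_le_mul (by omega) (wordLength_le_distortion hC hbT)

end Distortion

section Wreath

def activeGen (A : Type*) [Group A] : WreathProduct A Mℤ :=
  ofActive A Mℤ (Multiplicative.ofAdd 1)

variable {A : Type*} [Group A]

def intSupport (f : WreathBase A Mℤ) : Set ℤ :=
  {x | (f : Mℤ → A) (Multiplicative.ofAdd x) ≠ 1}

def shift (j : ℤ) : WreathBase A Mℤ ≃* WreathBase A Mℤ :=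
  wreathShift A Mℤ (Multiplicative.ofAdd (-j))

lemma shift_apply (j : ℤ) (f : WreathBase A Mℤ) (x : ℤ) :
    (shift j f : Mℤ → A) (Multiplicative.ofAdd x)
      = (f : Mℤ → A) (Multiplicative.ofAdd (x - j)) := by
  rw [sub_eq_add_neg, ofAdd_add]
  rfl

lemma wreathShift_eq_shift (u : Mℤ) : wreathShift A Mℤ u = shift (-Multiplicative.toAdd u) := by
  rw [shift, neg_neg, ofAdd_toAdd]

lemma mem_intSupport_shift (j : ℤ) (f : WreathBase A Mℤ) (x : ℤ) :
    x ∈ intSupport (shift j f) ↔ x - j ∈ intSupport f := by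
  simp only [intSupport, Set.mem_ofPred_eq, shift_apply]

lemma intSupport_mul (f g : WreathBase A Mℤ) :
    intSupport (f * g) ⊆ intSupport f ∪ intSupport g := by
  intro x hx
  by_contra hfg
  simp only [Set.mem_union, not_or, intSupport, Set.mem_ofPred_eq, not_not] at hfg
  exact hx (by rw [Subgroup.coe_mul, Pi.mul_apply, hfg.1, hfg.2, mul_one])

lemma intSupport_inv (f : WreathBase A Mℤ) : intSupport f⁻¹ = intSupport f := by
  ext x
  simp only [intSupport, Set.mem_ofPred_eq, Subgroup.coe_inv, Pi.inv_apply, ne_eq, inv_eq_one]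

lemma intSupport_finite (f : WreathBase A Mℤ) : (intSupport f).Finite :=
  f.2.preimage Multiplicative.ofAdd.injective.injOn

lemma finite_setOf_intSupport_subset_Icc [Finite A] (a b : ℤ) :
    {f : WreathBase A Mℤ | intSupport f ⊆ Set.Icc a b}.Finite := by
  refine Set.Finite.of_finite_image (f := fun f (x : Set.Icc a b) =>
    (f : Mℤ → A) (Multiplicative.ofAdd (x : ℤ))) (Set.toFinite _) fun f hf g hg hfg => ?_
  refine Subtype.ext (funext fun y => ?_)
  by_cases hy : Multiplicative.toAdd y ∈ Set.Icc a b
  · exact congrFun hfg ⟨_, hy⟩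
  · have hf' : Multiplicative.toAdd y ∉ intSupport f := fun h => hy (hf h)
    have hg' : Multiplicative.toAdd y ∉ intSupport g := fun h => hy (hg h)
    simp only [intSupport, Set.mem_ofPred_eq, not_not, ofAdd_toAdd] at hf' hg'
    rw [hf', hg']

lemma inr_ofAdd_eq_zpow (t : ℤ) :
    (SemidirectProduct.inr (Multiplicative.ofAdd t) : WreathProduct A Mℤ) = activeGen A ^ t := by
  rw [activeGen, ofActive, ← map_zpow, ← ofAdd_zsmul, smul_eq_mul, mul_one]

lemma inl_shift (j : ℤ) (f : WreathBase A Mℤ) :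
    (SemidirectProduct.inl (shift j f) : WreathProduct A Mℤ)
      = activeGen A ^ (-j) * SemidirectProduct.inl f * activeGen A ^ j := by
  change SemidirectProduct.inl (wreathAction A Mℤ (Multiplicative.ofAdd (-j)) f) = _
  rw [SemidirectProduct.inl_aut, ← ofAdd_neg, neg_neg, inr_ofAdd_eq_zpow, inr_ofAdd_eq_zpow]

lemma inl_left_mul_zpow (g : WreathProduct A Mℤ) :
    SemidirectProduct.inl g.left * activeGen A ^ Multiplicative.toAdd g.right = g := by
  rw [← inr_ofAdd_eq_zpow, ofAdd_toAdd, SemidirectProduct.inl_left_mul_inr_right]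

def Confined (m : ℕ) (g : WreathProduct A Mℤ) : Prop :=
  intSupport g.left ⊆ Set.Icc (-(m : ℤ)) m ∧ (Multiplicative.toAdd g.right).natAbs ≤ m

lemma Confined.mono {m n : ℕ} {g : WreathProduct A Mℤ} (hg : Confined m g) (hmn : m ≤ n) :
    Confined n g := by
  refine ⟨hg.1.trans (Set.Icc_subset_Icc (by omega) (by omega)), hg.2.trans hmn⟩

lemma confined_one : Confined 0 (1 : WreathProduct A Mℤ) :=
  ⟨fun x hx => absurd rfl hx, by simp⟩

lemma Confined.mul {m n : ℕ} {g g' : WreathProduct A Mℤ} (hg : Confined m g)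
    (hg' : Confined n g') : Confined (m + n) (g * g') := by
  refine ⟨fun x hx => ?_, ?_⟩
  · rw [SemidirectProduct.mul_left] at hx
    change x ∈ intSupport (g.left * wreathShift A Mℤ g.right g'.left) at hx
    rw [wreathShift_eq_shift] at hx
    have hright := hg.2
    rcases intSupport_mul _ _ hx with hx | hx
    · have := hg.1 hx
      simp only [Set.mem_Icc] at this ⊢
      omega
    · have := hg'.1 ((mem_intSupport_shift _ _ _).mp hx)
      simp only [Set.mem_Icc] at this ⊢
      omega
  · have := hg.2
    have := hg'.2
    simp only [SemidirectProduct.mul_right, toAdd_mul]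
    omega

lemma exists_confined (g : WreathProduct A Mℤ) : ∃ m, Confined m g := by
  obtain ⟨m, hm⟩ := ((intSupport_finite g.left).image Int.natAbs).bddAbove
  refine ⟨max m (Multiplicative.toAdd g.right).natAbs, fun x hx => ?_, le_max_right _ _⟩
  have := hm ⟨x, hx, rfl⟩
  simp only [Set.mem_Icc]
  omega

lemma exists_confined_mul_wordLength {T : Set (WreathProduct A Mℤ)} (hT : T.Finite)
    (hTgen : Subgroup.closure T = ⊤) : ∃ c, ∀ g, Confined (c * wordLength T g) g := by
  choose m hm using exists_confined (A := A)
  obtain ⟨c, hc⟩ := ((hT.union hT.inv).image m).bddAbove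
  exact ⟨c, wordLength_induction hTgen confined_one (fun _ _ _ _ => Confined.mul)
    fun t ht => (hm t).mono (hc ⟨t, ht, rfl⟩)⟩

end Wreath

section Subgroup

variable {A : Type*} [Group A] {H : Subgroup (WreathProduct A Mℤ)}

variable (H) in
def bottomValues (d : ℕ) : Set A :=
  {a | ∃ f ∈ H.comap SemidirectProduct.inl, intSupport f ⊆ Set.Icc 0 (d : ℤ) ∧
    (f : Mℤ → A) (Multiplicative.ofAdd 0) = a}

lemma bottomValues_mono : Monotone (bottomValues H) :=
  fun _ _ hd _ ⟨f, hf, hsupp, hval⟩ =>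
    ⟨f, hf, hsupp.trans (Set.Icc_subset_Icc_right (by exact_mod_cast hd)), hval⟩

variable (H) in
lemma exists_bottomValues_subset [Finite A] : ∃ d₀, ∀ d, bottomValues H d ⊆ bottomValues H d₀ := by
  obtain ⟨d₀, hd₀⟩ := WellFoundedGT.monotone_chain_condition ⟨bottomValues H, bottomValues_mono⟩
  refine ⟨d₀, fun d => ?_⟩
  rcases le_total d d₀ with h | h
  · exact bottomValues_mono h
  · exact (hd₀ d h).symm.le

def WindowBound (S : Set H) (d₀ K : ℕ) : Prop :=
  ∀ (x : H) (e : WreathBase A Mℤ), (x : WreathProduct A Mℤ) = SemidirectProduct.inl e →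
    intSupport e ⊆ Set.Icc 0 (d₀ : ℤ) → wordLength S x ≤ K

variable {S : Set H} {K d₀ : ℕ}

lemma exists_intSupport_shift_inv_mul_subset (hstab : ∀ d, bottomValues H d ⊆ bottomValues H d₀)
    {n : ℕ} (hd₀ : d₀ ≤ n) {f : WreathBase A Mℤ} (hfH : f ∈ H.comap SemidirectProduct.inl)
    (hf : intSupport f ⊆ Set.Icc 0 ((n + 1 : ℕ) : ℤ)) :
    ∃ e ∈ H.comap SemidirectProduct.inl, intSupport e ⊆ Set.Icc 0 (d₀ : ℤ) ∧
      intSupport (shift (-1) (e⁻¹ * f)) ⊆ Set.Icc 0 (n : ℤ) := by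
  obtain ⟨e, heH, he, he0⟩ := hstab (n + 1) ⟨f, hfH, hf, rfl⟩
  refine ⟨e, heH, he, fun y hy => ?_⟩
  rw [mem_intSupport_shift, sub_neg_eq_add] at hy
  -- `e` and `f` agree at `0`, so `e⁻¹ * f` is supported in `[1, n + 1]`.
  have hy0 : y + 1 ≠ 0 := by
    rintro h0
    rw [h0] at hy
    exact hy (by
      change ((e : Mℤ → A) _)⁻¹ * (f : Mℤ → A) _ = 1
      rw [he0, inv_mul_cancel])
  rcases intSupport_mul _ _ hy with hy | hy
  · have := he (by rwa [intSupport_inv] at hy)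
    simp only [Set.mem_Icc] at this ⊢
    omega
  · have := hf hy
    simp only [Set.mem_Icc] at this ⊢
    push_cast at this
    omega

lemma wordLength_le_of_intSupport_subset_window (hb : activeGen A ∈ H)
    (hSgen : Subgroup.closure S = ⊤) (hKb : wordLength S ⟨activeGen A, hb⟩ ≤ K)
    (hKE : WindowBound S d₀ K) {f : WreathBase A Mℤ} (hf : intSupport f ⊆ Set.Icc 0 (d₀ : ℤ))
    {t : ℤ} (x : H)
    (hx : (x : WreathProduct A Mℤ) = SemidirectProduct.inl f * activeGen A ^ t) :
    wordLength S x ≤ K + t.natAbs * K := by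
  set bH : H := ⟨activeGen A, hb⟩
  calc wordLength S x = wordLength S (x * bH ^ (-t) * bH ^ t) := by
        rw [zpow_neg, inv_mul_cancel_right]
    _ ≤ wordLength S (x * bH ^ (-t)) + wordLength S (bH ^ t) := wordLength_mul_le hSgen _ _
    _ ≤ K + t.natAbs * K := add_le_add (hKE _ f (by simp [bH, hx]) hf)
        ((wordLength_zpow_le hSgen _ t).trans (Nat.mul_le_mul_left _ hKb))

lemma wordLength_le_of_intSupport_subset (hb : activeGen A ∈ H)
    (hSgen : Subgroup.closure S = ⊤) (hKb : wordLength S ⟨activeGen A, hb⟩ ≤ K)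
    (hKE : WindowBound S d₀ K) (hstab : ∀ d, bottomValues H d ⊆ bottomValues H d₀) (n : ℕ)
    {f : WreathBase A Mℤ} (hf : intSupport f ⊆ Set.Icc 0 (n : ℤ)) (x : H)
    (hx : (x : WreathProduct A Mℤ) = SemidirectProduct.inl f * activeGen A ^ (-(n + 1 : ℤ))) :
    wordLength S x ≤ 2 * K * (n + 1) := by
  induction n generalizing f x with
  | zero =>
    have := wordLength_le_of_intSupport_subset_window hb hSgen hKb hKE
      (hf.trans (Set.Icc_subset_Icc_right (by positivity))) x hx
    simp only [Nat.cast_zero, zero_add, Int.reduceNeg, Int.reduceAbs] at this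
    omega
  | succ n ih =>
    by_cases hw : intSupport f ⊆ Set.Icc 0 (d₀ : ℤ)
    · have := wordLength_le_of_intSupport_subset_window hb hSgen hKb hKE hw x hx
      rw [show (-((n + 1 : ℕ) + 1 : ℤ)).natAbs = n + 2 by omega] at this
      nlinarith
    have hd₀ : d₀ ≤ n := by
      by_contra! h
      exact hw (hf.trans (Set.Icc_subset_Icc_right (by exact_mod_cast h)))
    set bH : H := ⟨activeGen A, hb⟩
    have hfH : f ∈ H.comap SemidirectProduct.inl := by
      rw [Subgroup.mem_comap, show SemidirectProduct.inl f = (x * bH ^ ((n + 1 : ℕ) + 1 : ℤ) : H)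
        by simp only [bH, Subgroup.coe_mul, Subgroup.coe_zpow, hx]; group]
      exact SetLike.coe_mem _
    obtain ⟨e, heH, he, hf'⟩ := exists_intSupport_shift_inv_mul_subset hstab hd₀ hfH hf
    set E : H := ⟨SemidirectProduct.inl e, heH⟩
    set x' : H := bH * E⁻¹ * x
    have hx' : (x' : WreathProduct A Mℤ)
        = SemidirectProduct.inl (shift (-1) (e⁻¹ * f)) * activeGen A ^ (-(n + 1 : ℤ)) := by
      simp only [x', E, bH, Subgroup.coe_mul, Subgroup.coe_inv, hx, inl_shift, map_mul,
        map_inv]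
      push_cast
      group
    calc wordLength S x = wordLength S (E * bH⁻¹ * x') := by simp only [x']; group
      _ ≤ wordLength S E + wordLength S bH⁻¹ + wordLength S x' :=
          (wordLength_mul_le hSgen _ _).trans
            (Nat.add_le_add_right (wordLength_mul_le hSgen _ _) _)
      _ ≤ K + K + 2 * K * (n + 1) := by
          rw [wordLength_inv hSgen]
          exact add_le_add (add_le_add (hKE E e rfl he) hKb) (ih hf' x' hx')
      _ = 2 * K * (n + 1 + 1) := by ring

lemma wordLength_le_of_confined (hb : activeGen A ∈ H)
    (hSgen : Subgroup.closure S = ⊤) (hKb : wordLength S ⟨activeGen A, hb⟩ ≤ K)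
    (hKE : WindowBound S d₀ K) (hstab : ∀ d, bottomValues H d ⊆ bottomValues H d₀)
    {m : ℕ} (h : H)
    (hm : Confined m (h : WreathProduct A Mℤ)) : wordLength S h ≤ 7 * K * (m + 1) := by
  set bH : H := ⟨activeGen A, hb⟩
  set t := Multiplicative.toAdd (h : WreathProduct A Mℤ).right with ht_def
  set x : H := bH ^ (-(m : ℤ)) * h * bH ^ (-(t + m + 1))
  have hf : intSupport (shift m (h : WreathProduct A Mℤ).left) ⊆ Set.Icc 0 ((2 * m : ℕ) : ℤ) := by
    intro y hy
    have := hm.1 ((mem_intSupport_shift _ _ _).mp hy)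
    simp only [Set.mem_Icc] at this ⊢
    push_cast
    omega
  have hx : (x : WreathProduct A Mℤ)
      = SemidirectProduct.inl (shift m (h : WreathProduct A Mℤ).left)
        * activeGen A ^ (-((2 * m : ℕ) + 1 : ℤ)) := by
    simp only [x, bH, Subgroup.coe_mul, Subgroup.coe_zpow, inl_shift]
    conv_lhs => rw [← inl_left_mul_zpow (h : WreathProduct A Mℤ)]
    rw [← ht_def]
    push_cast
    group
  have ht : (t + m + 1).natAbs ≤ 2 * m + 1 := by
    have := hm.2
    omega
  calc wordLength S h = wordLength S (bH ^ (m : ℤ) * x * bH ^ (t + m + 1)) := by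
        simp only [x]
        group
    _ ≤ wordLength S (bH ^ (m : ℤ)) + wordLength S x + wordLength S (bH ^ (t + m + 1)) :=
        (wordLength_mul_le hSgen _ _).trans
          (Nat.add_le_add_right (wordLength_mul_le hSgen _ _) _)
    _ ≤ m * K + 2 * K * (2 * m + 1) + (2 * m + 1) * K := by
        gcongr
        · exact (wordLength_zpow_le hSgen _ _).trans (Nat.mul_le_mul (by simp) hKb)
        · exact wordLength_le_of_intSupport_subset hb hSgen hKb hKE hstab (2 * m) hf x hx
        · exact (wordLength_zpow_le hSgen _ _).trans (Nat.mul_le_mul ht hKb)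
    _ ≤ 7 * K * (m + 1) := by nlinarith

theorem exists_wordLength_le_mul_wordLength [Finite A] (hb : activeGen A ∈ H)
    {T : Set (WreathProduct A Mℤ)} (hT : T.Finite) (hTgen : Subgroup.closure T = ⊤)
    (hSgen : Subgroup.closure S = ⊤) :
    ∃ C, ∀ h : H, wordLength S h ≤ C * wordLength T (h : WreathProduct A Mℤ) := by
  obtain ⟨d₀, hstab⟩ := exists_bottomValues_subset H
  have hwindow : {x : H | ∃ e, (x : WreathProduct A Mℤ) = SemidirectProduct.inl e ∧
      intSupport e ⊆ Set.Icc 0 (d₀ : ℤ)}.Finite :=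
    (((finite_setOf_intSupport_subset_Icc 0 d₀).image SemidirectProduct.inl).preimage
      Subtype.val_injective.injOn).subset fun x ⟨e, hx, he⟩ => ⟨e, he, hx.symm⟩
  obtain ⟨K, hK⟩ := ((hwindow.insert ⟨activeGen A, hb⟩).image (wordLength S)).bddAbove
  obtain ⟨c, hc⟩ := exists_confined_mul_wordLength hT hTgen
  refine ⟨7 * K * (c + 1), fun h => ?_⟩
  rcases Nat.eq_zero_or_pos (wordLength T (h : WreathProduct A Mℤ)) with h0 | hpos
  · rw [(Subtype.ext (eq_one_of_wordLength_eq_zero hTgen h0) : h = 1)]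
    simp [wordLength_one]
  calc wordLength S h ≤ 7 * K * (c * wordLength T (h : WreathProduct A Mℤ) + 1) :=
        wordLength_le_of_confined hb hSgen (hK ⟨_, Set.mem_insert _ _, rfl⟩)
          (fun x e hx he => hK ⟨x, Set.mem_insert_of_mem _ ⟨e, hx, he⟩, rfl⟩) hstab h (hc h)
    _ ≤ 7 * K * (c + 1) * wordLength T (h : WreathProduct A Mℤ) := by
        rw [mul_assoc _ (c + 1)]
        exact Nat.mul_le_mul_left _ (by nlinarith)

end Subgroup

theorem statement17_general (p : ℕ) (hp : p.Prime) (k : ℕ)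
    (H : Subgroup (WreathProduct (Multiplicative (Fin k → ZMod p)) Mℤ))
    (hb : ofActive (Multiplicative (Fin k → ZMod p)) Mℤ (Multiplicative.ofAdd 1) ∈ H) :
    ∀ (T : Set (WreathProduct (Multiplicative (Fin k → ZMod p)) Mℤ)) (S : Set H),
      T.Finite → Subgroup.closure T = ⊤ → S.Finite → Subgroup.closure S = ⊤ →
      DistEquiv (distortion T H S) (fun l => l) := by
  intro T S hT hTgen hS hSgen
  have : NeZero p := ⟨hp.ne_zero⟩
  obtain ⟨C, hC⟩ := exists_wordLength_le_mul_wordLength (H := H) hb hT hTgen hSgen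
  exact distEquiv_distortion_id hTgen hS hSgen hC (SemidirectProduct.rightHom.comp H.subtype)
    (b := ⟨_, hb⟩) rfl

/-- For `p` prime and `k ≥ 1`, every finitely generated subgroup of
`(ℤ/pℤ)^k wr ℤ` containing the active generator `b` is undistorted. -/
theorem statement17 (p : ℕ) (hp : p.Prime) (k : ℕ) (hk : 1 ≤ k)
    (H : Subgroup (WreathProduct (Multiplicative (Fin k → ZMod p)) Mℤ)) (hFG : H.FG)
    (hb : ofActive (Multiplicative (Fin k → ZMod p)) Mℤ (Multiplicative.ofAdd 1) ∈ H) :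
    ∀ (T : Set (WreathProduct (Multiplicative (Fin k → ZMod p)) Mℤ)) (S : Set H),
      T.Finite → Subgroup.closure T = ⊤ → S.Finite → Subgroup.closure S = ⊤ →
      DistEquiv (distortion T H S) (fun l => l) :=
  statement17_general p hp k H hb

end DistortionPaper
end
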